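/- Let π : G → K be a surjective group homomorphism and let A be a finite symmetric generating set of G, so that π(A) is a finite symmetric generating set of K. If there exist a ∈ π(A) and a word w over π(A) such that the word a·w·a⁻¹ (the letter a, followed by the letters of w, followed by a⁻¹) is geodesic in K over π(A), then the geodesic language Geo(G,A) is not piecewise excluding. -/

import Mathlib

/-- `w` is a word over the alphabet `A`: every letter of `w` lies in `A`. -/
def IsWordOver {G : Type*} (A : Finset G) (w : List G) : Prop :=
  ∀ x ∈ w, x ∈ A

/-- `A` is a finite symmetric (inverse-closed) generating set of the group `G`. -/
def IsSymmGen {G : Type*} [Group G] (A : Finset G) : Prop :=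
  Subgroup.closure (A : Set G) = ⊤ ∧ ∀ a ∈ A, a⁻¹ ∈ A

/-- `w` is a geodesic word over `A`: no word over `A` of strictly smaller length
evaluates to the same element of `G`. -/
def IsGeodesic {G : Type*} [Group G] (A : Finset G) (w : List G) : Prop :=
  IsWordOver A w ∧
    ∀ v : List G, IsWordOver A v → v.prod = w.prod → w.length ≤ v.length

/-- The geodesic language of `G` over `A`. -/
def Geo {G : Type*} [Group G] (A : Finset G) : Set (List G) :=
  {w | IsGeodesic A w}

/-- A language `L` of words over `A` is piecewise excluding if there is a finite set `F`
of words over `A` such that a word `w` over `A` lies in `L` iff no element of `F` is a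
piecewise subword (i.e. a not-necessarily-contiguous subsequence) of `w`. -/
def PiecewiseExcluding {G : Type*} (A : Finset G) (L : Set (List G)) : Prop :=
  ∃ F : Finset (List G), (∀ u ∈ F, IsWordOver A u) ∧
    ∀ w : List G, IsWordOver A w → (w ∈ L ↔ ∀ u ∈ F, ¬ List.Sublist u w)

/-! Piecewise excluding languages are closed under taking subwords. Lifting `a·w·a⁻¹` letter by
letter gives a word `α·ω·α⁻¹` over `A`, which is geodesic because `π` does not increase word
length; its subword `α·α⁻¹` evaluates to `1` and so is not geodesic. -/

lemma IsWordOver.sublist {G : Type*} {A : Finset G} {u w : List G} (hw : IsWordOver A w)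
    (h : u.Sublist w) : IsWordOver A u :=
  fun x hx => hw x (h.subset hx)

lemma IsWordOver.map {G K : Type*} [DecidableEq K] (f : G → K) {A : Finset G} {w : List G}
    (hw : IsWordOver A w) : IsWordOver (A.image f) (w.map f) := by
  intro x hx
  obtain ⟨g, hg, rfl⟩ := List.mem_map.mp hx
  exact Finset.mem_image_of_mem f (hw g hg)

lemma IsWordOver.exists_map_eq_of_image {G K : Type*} [DecidableEq K] {f : G → K}
    {A : Finset G} : ∀ {w : List K}, IsWordOver (A.image f) w →
      ∃ v : List G, IsWordOver A v ∧ v.map f = w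
  | [], _ => ⟨[], by simp [IsWordOver]⟩
  | k :: w, h => by
    obtain ⟨g, hg, rfl⟩ := Finset.mem_image.mp (h k List.mem_cons_self)
    obtain ⟨v, hv, rfl⟩ := exists_map_eq_of_image fun x hx => h x (List.mem_cons_of_mem _ hx)
    exact ⟨g :: v, by simpa [IsWordOver] using And.intro hg hv, rfl⟩

lemma IsSymmGen.image {G K : Type*} [Group G] [Group K] [DecidableEq K] {π : G →* K}
    (hπ : Function.Surjective π) {A : Finset G} (hA : IsSymmGen A) :
    IsSymmGen (A.image π) := by
  refine ⟨?_, fun x hx => ?_⟩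
  · rw [Finset.coe_image, ← MonoidHom.map_closure, hA.1]
    exact Subgroup.map_top_of_surjective π hπ
  · obtain ⟨g, hg, rfl⟩ := Finset.mem_image.mp hx
    exact Finset.mem_image.mpr ⟨g⁻¹, hA.2 g hg, map_inv π g⟩

lemma IsGeodesic.of_map {G K : Type*} [Group G] [Group K] [DecidableEq K] (π : G →* K)
    {A : Finset G} {w : List G} (hw : IsWordOver A w) (h : IsGeodesic (A.image π) (w.map π)) :
    IsGeodesic A w := by
  refine ⟨hw, fun v hv hprod => ?_⟩
  have hprod' : (v.map π).prod = (w.map π).prod := by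
    rw [← map_list_prod, ← map_list_prod, hprod]
  simpa using h.2 (v.map π) (hv.map π) hprod'

lemma not_isGeodesic_pair_inv {G : Type*} [Group G] (A : Finset G) (x : G) :
    ¬ IsGeodesic A [x, x⁻¹] := fun h => by
  simpa using h.2 [] (by simp [IsWordOver]) (by simp)

lemma PiecewiseExcluding.mem_of_sublist {G : Type*} {A : Finset G} {L : Set (List G)}
    (hL : PiecewiseExcluding A L) {u w : List G} (hw : IsWordOver A w) (hwL : w ∈ L)
    (h : u.Sublist w) : u ∈ L := by
  obtain ⟨F, -, hF⟩ := hL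
  exact (hF u (hw.sublist h)).mpr fun v hv hvu => (hF w hw).mp hwL v hv (hvu.trans h)

/-- If `π : G → K` is surjective and some word `a·w·a⁻¹` over `π(A)` (with `a ∈ π(A)`)
is geodesic in `K`, then `Geo(G,A)` is not piecewise excluding. -/
theorem extension_not_piecewise_excluding
    {G K : Type*} [Group G] [Group K] [DecidableEq K]
    (π : G →* K) (hπ : Function.Surjective π)
    (A : Finset G) (hA : IsSymmGen A)
    (a : K) (ha : a ∈ A.image π) (w : List K) (hw : IsWordOver (A.image π) w)
    (hgeo : IsGeodesic (A.image π) (a :: (w ++ [a⁻¹]))) :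
    IsSymmGen (A.image π) ∧ ¬ PiecewiseExcluding A (Geo A) := by
  refine ⟨hA.image hπ, fun hPE => ?_⟩
  obtain ⟨α, hα, rfl⟩ := Finset.mem_image.mp ha
  obtain ⟨ω, hω, rfl⟩ := hw.exists_map_eq_of_image
  have hW : IsWordOver A (α :: (ω ++ [α⁻¹])) := by
    simpa [IsWordOver, or_imp, forall_and] using ⟨hα, hω, hA.2 α hα⟩
  have hWgeo : IsGeodesic A (α :: (ω ++ [α⁻¹])) :=
    .of_map π hW (by simpa using hgeo)
  have hsub : [α, α⁻¹].Sublist (α :: (ω ++ [α⁻¹])) :=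
    List.cons_sublist_cons.mpr (List.sublist_append_right ω [α⁻¹])
  exact not_isGeodesic_pair_inv A α (hPE.mem_of_sublist hW hWgeo hsub)
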